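/- With the same setup of integer paths with steps in {-1,0,1} starting at 0, the transformations T_g satisfy the semigroup-type identity T_{g₂} ∘ T_{g₁} = T_{min(g₁, g₂)} for all nonnegative integers g₁, g₂; in particular T_g is idempotent: T_g ∘ T_g = T_g. -/
import Mathlib


/-- Running maximum `max_{0 ≤ i ≤ j} x i`. -/
noncomputable def runMax (x : ℕ → ℤ) (j : ℕ) : ℤ :=
  (Finset.range (j + 1)).sup' (Finset.nonempty_range_iff.mpr (Nat.succ_ne_zero j)) x

/-- Pitman-type transformation `T_g(x)(j) = x j - 2 * ((max_{0 ≤ i ≤ j} x i) - g)₊`. -/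
noncomputable def Ttrop (g : ℤ) (x : ℕ → ℤ) (j : ℕ) : ℤ :=
  x j - 2 * max (runMax x j - g) 0

lemma runMax_zero (x : ℕ → ℤ) : runMax x 0 = x 0 := by
  simp [runMax]

lemma le_runMax (x : ℕ → ℤ) {i j : ℕ} (h : i ≤ j) : x i ≤ runMax x j :=
  Finset.le_sup' x (Finset.mem_range.mpr (Nat.lt_succ_of_le h))

lemma exists_runMax (x : ℕ → ℤ) (j : ℕ) : ∃ i ≤ j, x i = runMax x j := by
  obtain ⟨i, hi, hx⟩ := Finset.exists_mem_eq_sup' (Finset.nonempty_range_iff.mpr (Nat.succ_ne_zero j)) x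
  exact ⟨i, Nat.lt_succ_iff.mp (Finset.mem_range.mp hi), hx.symm⟩

lemma runMax_succ (x : ℕ → ℤ) (j : ℕ) :
    runMax x (j + 1) = max (runMax x j) (x (j + 1)) := by
  apply le_antisymm
  · apply Finset.sup'_le
    intro i hi
    rcases Nat.lt_succ_iff_lt_or_eq.mp (Finset.mem_range.mp hi) with h | h
    · exact le_max_of_le_left (le_runMax x (Nat.lt_succ_iff.mp h))
    · subst h; exact le_max_right _ _
  · exact max_le (Finset.sup'_mono x (Finset.range_subset_range.mpr (by omega))
      (Finset.nonempty_range_iff.mpr (Nat.succ_ne_zero j))) (le_runMax x le_rfl)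

/-- Intermediate-value: a level `0 ≤ g ≤ runMax x j` is hit by both `x` and its running max. -/
lemma hits (x : ℕ → ℤ) (hx0 : x 0 = 0)
    (hstep : ∀ j : ℕ, x (j + 1) - x j ∈ ({-1, 0, 1} : Set ℤ))
    {g : ℤ} (hg : 0 ≤ g) : ∀ j, g ≤ runMax x j → ∃ i ≤ j, x i = g ∧ runMax x i = g := by
  intro j
  induction j with
  | zero =>
    intro h
    rw [runMax_zero, hx0] at h
    exact ⟨0, le_rfl, by omega, by rw [runMax_zero]; omega⟩
  | succ n ih =>
    intro h
    by_cases hn : g ≤ runMax x n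
    · obtain ⟨i, hi, hxi⟩ := ih hn
      exact ⟨i, by omega, hxi⟩
    · push_neg at hn
      have hs := hstep n
      simp only [Set.mem_insert_iff, Set.mem_singleton_iff] at hs
      have hle : x n ≤ runMax x n := le_runMax x le_rfl
      rw [runMax_succ] at h
      have hx : x (n + 1) = g := by omega
      exact ⟨n + 1, le_rfl, hx, by rw [runMax_succ]; omega⟩

lemma runMax_Ttrop (x : ℕ → ℤ) (hx0 : x 0 = 0)
    (hstep : ∀ j : ℕ, x (j + 1) - x j ∈ ({-1, 0, 1} : Set ℤ))
    {g : ℤ} (hg : 0 ≤ g) (j : ℕ) :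
    runMax (Ttrop g x) j = min (runMax x j) g := by
  apply le_antisymm
  · apply Finset.sup'_le
    intro i hi
    have hi' : i ≤ j := Nat.lt_succ_iff.mp (Finset.mem_range.mp hi)
    have h1 : x i ≤ runMax x i := le_runMax x le_rfl
    have h2 : runMax x i ≤ runMax x j := by
      obtain ⟨k, hk, hxk⟩ := exists_runMax x i
      rw [← hxk]; exact le_runMax x (hk.trans hi')
    simp only [Ttrop]
    omega
  · rcases le_or_gt (runMax x j) g with h | h
    · obtain ⟨i, hi, hxi⟩ := exists_runMax x j
      have h2 : runMax x i ≤ runMax x j := by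
        obtain ⟨k, hk, hxk⟩ := exists_runMax x i
        rw [← hxk]; exact le_runMax x (hk.trans hi)
      have h1 : x i ≤ runMax x i := le_runMax x le_rfl
      have := le_runMax (Ttrop g x) hi
      simp only [Ttrop] at this
      omega
    · obtain ⟨i, hi, hxi, hmi⟩ := hits x hx0 hstep hg j (le_of_lt h)
      have := le_runMax (Ttrop g x) hi
      simp only [Ttrop, hxi, hmi] at this
      omega

/-- For paths starting at 0 with steps in `{-1,0,1}`, `T_{g₂} ∘ T_{g₁} = T_{min(g₁,g₂)}` for
nonnegative integers `g₁, g₂`; in particular each `T_g` is idempotent. -/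
theorem Ttrop_comp (x : ℕ → ℤ) (hx0 : x 0 = 0)
    (hstep : ∀ j : ℕ, x (j + 1) - x j ∈ ({-1, 0, 1} : Set ℤ)) :
    (∀ g₁ g₂ : ℤ, 0 ≤ g₁ → 0 ≤ g₂ →
      ∀ j, Ttrop g₂ (Ttrop g₁ x) j = Ttrop (min g₁ g₂) x j) ∧
    (∀ g : ℤ, 0 ≤ g → ∀ j, Ttrop g (Ttrop g x) j = Ttrop g x j) := by
  have main : ∀ g₁ g₂ : ℤ, 0 ≤ g₁ → 0 ≤ g₂ →
      ∀ j, Ttrop g₂ (Ttrop g₁ x) j = Ttrop (min g₁ g₂) x j := by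
    intro g₁ g₂ h1 h2 j
    have hm : runMax (Ttrop g₁ x) j = min (runMax x j) g₁ := runMax_Ttrop x hx0 hstep h1 j
    simp only [Ttrop, hm]
    have h0 : (0:ℤ) ≤ runMax x j := hx0 ▸ le_runMax x (Nat.zero_le j)
    omega
  refine ⟨main, fun g hg j => ?_⟩
  rw [main g g hg hg j, min_self]
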